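/- Let Z be standard normal, X_z = (Z - z conditioned on Z > z), and m(z) = E[X_z]. There exist universal constants C, c > 0 such that P(X_z > k·m(z)) ≤ C·e^{-ck} for all z ∈ ℝ and all positive integers k. -/

import Mathlib

/-!
Write `G a = ∫_a^∞ e^{-t²/2} dt`, `m = condMean z` and `r = z + m = e^{-z²/2} / G z`; the tail of
`X_z` beyond `k m` is `G (z + k m) / G z`. Since `e^{-(t+s)²/2} ≤ e^{-a s - s²/2} e^{-t²/2}` for
`t ≥ a` and `s ≥ 0`, splitting `z + k m = r + (k - 1) m` bounds it by
`exp (-((k - 1) m r + ((k - 1) m)² / 2))`. For `z ≥ 1` the Mills-type bound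
`G z ≤ 4z / (4z² + 1) e^{-z²/2}` gives `m r ≥ z m ≥ 1/4`, so the first term is linear in `k`. For
`z ≤ 1`, `m = ∫_z^∞ (t - z) e^{-t²/2} dt / G z` is bounded below, since the numerator decreases in
`z` and `G z ≤ ∫_ℝ e^{-t²/2}`; then the second term is at least linear in `k`.
-/

open MeasureTheory Set

/-- The density on `(0,∞)` of `X_z = (Z - z | Z > z)` for a standard normal `Z`. -/
noncomputable def condDens (z x : ℝ) : ℝ :=
  Real.exp (-(x + z) ^ 2 / 2) / (∫ t in Set.Ioi z, Real.exp (-t ^ 2 / 2))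

/-- The conditional mean overshoot `m z = E[X_z]`. -/
noncomputable def condMean (z : ℝ) : ℝ :=
  Real.exp (-z ^ 2 / 2) / (∫ t in Set.Ioi z, Real.exp (-t ^ 2 / 2)) - z

open Real Filter Topology

noncomputable def gaussTail (a : ℝ) : ℝ := ∫ t in Ioi a, exp (-t ^ 2 / 2)

lemma integrable_exp_neg_sq_div_two : Integrable fun t : ℝ => exp (-t ^ 2 / 2) := by
  simpa [neg_div, div_eq_inv_mul] using integrable_exp_neg_mul_sq (b := 1 / 2) (by norm_num)

lemma integrable_mul_exp_neg_sq_div_two : Integrable fun t : ℝ => t * exp (-t ^ 2 / 2) := by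
  simpa [neg_div, div_eq_inv_mul] using integrable_mul_exp_neg_mul_sq (b := 1 / 2) (by norm_num)

lemma setIntegral_Ioi_comp_add_right {E : Type*} [NormedAddCommGroup E] [NormedSpace ℝ E]
    (f : ℝ → E) (a b : ℝ) : ∫ s in Ioi a, f (s + b) = ∫ t in Ioi (a + b), f t := by
  have h := (measurePreserving_add_right volume b).setIntegral_preimage_emb
    (measurableEmbedding_addRight b) f (Ioi (a + b))
  rwa [show (· + b) ⁻¹' Ioi (a + b) = Ioi a by ext; simp] at h

lemma gaussTail_pos (a : ℝ) : 0 < gaussTail a := by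
  rw [gaussTail, setIntegral_pos_iff_support_of_nonneg_ae
    (.of_forall fun t => (exp_pos _).le) integrable_exp_neg_sq_div_two.integrableOn]
  simp [Function.support, (exp_pos _).ne']

lemma gaussTail_antitone : Antitone gaussTail := fun _ _ hab =>
  setIntegral_mono_set integrable_exp_neg_sq_div_two.integrableOn
    (.of_forall fun _ => (exp_pos _).le) (Ioi_subset_Ioi hab).eventuallyLE

lemma gaussTail_le_integral (a : ℝ) : gaussTail a ≤ ∫ t, exp (-t ^ 2 / 2) :=
  setIntegral_le_integral integrable_exp_neg_sq_div_two (.of_forall fun _ => (exp_pos _).le)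

lemma gaussTail_add_le (a : ℝ) {s : ℝ} (hs : 0 ≤ s) :
    gaussTail (a + s) ≤ exp (-(a * s) - s ^ 2 / 2) * gaussTail a := by
  rw [gaussTail, ← setIntegral_Ioi_comp_add_right, gaussTail, ← integral_const_mul]
  refine setIntegral_mono_on (integrable_exp_neg_sq_div_two.comp_add_right s).integrableOn
    (integrable_exp_neg_sq_div_two.integrableOn.const_mul _) measurableSet_Ioi fun t ht => ?_
  rw [← exp_add, exp_le_exp]
  nlinarith [mul_le_mul_of_nonneg_right (le_of_lt ht) hs]

lemma tendsto_exp_neg_sq_div_two_atTop :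
    Tendsto (fun t : ℝ => exp (-t ^ 2 / 2)) atTop (𝓝 0) :=
  tendsto_exp_atBot.comp <|
    (tendsto_neg_atBot_iff.2 (tendsto_pow_atTop two_ne_zero)).atBot_div_const two_pos

lemma integral_Ioi_mul_exp_neg_sq_div_two (a : ℝ) :
    ∫ t in Ioi a, t * exp (-t ^ 2 / 2) = exp (-a ^ 2 / 2) := by
  have hderiv (t : ℝ) : HasDerivAt (fun t => -exp (-t ^ 2 / 2)) (t * exp (-t ^ 2 / 2)) t := by
    refine (((hasDerivAt_pow 2 t).neg.div_const 2).exp).neg.congr_deriv ?_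
    simp only [Pi.neg_apply]
    ring
  rw [integral_Ioi_of_hasDerivAt_of_tendsto' (fun t _ => hderiv t)
    integrable_mul_exp_neg_sq_div_two.integrableOn tendsto_exp_neg_sq_div_two_atTop.neg]
  ring

lemma integral_Ioi_sub_mul_exp_neg_sq_div_two (a : ℝ) :
    ∫ t in Ioi a, (t - a) * exp (-t ^ 2 / 2) = exp (-a ^ 2 / 2) - a * gaussTail a := by
  simp_rw [sub_mul]
  rw [integral_sub integrable_mul_exp_neg_sq_div_two.integrableOn
    (integrable_exp_neg_sq_div_two.integrableOn.const_mul a), integral_const_mul,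
    integral_Ioi_mul_exp_neg_sq_div_two, gaussTail]

lemma antitone_integral_Ioi_sub_mul_exp_neg_sq_div_two :
    Antitone fun a : ℝ => ∫ t in Ioi a, (t - a) * exp (-t ^ 2 / 2) := by
  intro a b hab
  have hint (c : ℝ) : IntegrableOn (fun t => (t - c) * exp (-t ^ 2 / 2)) (Ioi c) := by
    simp_rw [sub_mul]
    exact (integrable_mul_exp_neg_sq_div_two.sub
      (integrable_exp_neg_sq_div_two.const_mul c)).integrableOn
  calc ∫ t in Ioi b, (t - b) * exp (-t ^ 2 / 2)
      ≤ ∫ t in Ioi b, (t - a) * exp (-t ^ 2 / 2) :=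
        setIntegral_mono_on (hint b) ((hint a).mono_set (Ioi_subset_Ioi hab)) measurableSet_Ioi
          fun t _ => by gcongr
    _ ≤ ∫ t in Ioi a, (t - a) * exp (-t ^ 2 / 2) := by
        refine setIntegral_mono_set (hint a) ?_ (Ioi_subset_Ioi hab).eventuallyLE
        filter_upwards [self_mem_ae_restrict measurableSet_Ioi] with t ht
        exact mul_nonneg (sub_nonneg.2 (le_of_lt ht)) (exp_pos _).le

lemma gaussTail_le_div_mul_exp (a : ℝ) (ha : 0 ≤ a) (ha2 : 5 ≤ 12 * a ^ 2) :
    gaussTail a ≤ 4 * a / (4 * a ^ 2 + 1) * exp (-a ^ 2 / 2) := by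
  set F : ℝ → ℝ := fun t => -(4 * t / (4 * t ^ 2 + 1) * exp (-t ^ 2 / 2))
  set F' : ℝ → ℝ := fun t =>
    (16 * t ^ 4 + 20 * t ^ 2 - 4) / (4 * t ^ 2 + 1) ^ 2 * exp (-t ^ 2 / 2)
  have hderiv (t : ℝ) : HasDerivAt F (F' t) t := by
    have hq : 4 * t ^ 2 + 1 ≠ 0 := by positivity
    refine ((((hasDerivAt_id' t).const_mul 4).div
      (((hasDerivAt_pow 2 t).const_mul 4).add_const 1) hq).mul
      ((hasDerivAt_pow 2 t).neg.div_const 2).exp).neg.congr_deriv ?_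
    simp only [F', Pi.neg_apply, Pi.div_apply]
    field_simp
    ring
  have hF'_ge (t : ℝ) (ht : t ∈ Ioi a) : exp (-t ^ 2 / 2) ≤ F' t := by
    have hta : a ^ 2 ≤ t ^ 2 := pow_le_pow_left₀ ha (le_of_lt ht) 2
    refine le_mul_of_one_le_left (exp_pos _).le ?_
    rw [one_le_div (by positivity)]
    nlinarith
  have hlim : Tendsto F atTop (𝓝 0) := by
    refine squeeze_zero_norm' ?_ tendsto_exp_neg_sq_div_two_atTop
    filter_upwards [eventually_ge_atTop 0] with t ht
    have hfrac : 4 * t / (4 * t ^ 2 + 1) ≤ 1 := by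
      rw [div_le_one (by positivity)]
      nlinarith [sq_nonneg (2 * t - 1)]
    rw [norm_neg, norm_mul, norm_of_nonneg (by positivity), norm_of_nonneg (exp_pos _).le]
    exact mul_le_of_le_one_left (exp_pos _).le hfrac
  have hF'_int := integrableOn_Ioi_deriv_of_nonneg' (fun t _ => hderiv t)
    (fun t ht => (exp_pos _).le.trans (hF'_ge t ht)) hlim
  calc gaussTail a ≤ ∫ t in Ioi a, F' t :=
        setIntegral_mono_on integrable_exp_neg_sq_div_two.integrableOn hF'_int measurableSet_Ioi
          hF'_ge
    _ = _ := by
        rw [integral_Ioi_of_hasDerivAt_of_tendsto' (fun t _ => hderiv t) hF'_int hlim]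
        simp [F]

lemma add_condMean (z : ℝ) : z + condMean z = exp (-z ^ 2 / 2) / gaussTail z := by
  rw [condMean, gaussTail]
  ring

lemma condMean_eq_integral_div (z : ℝ) :
    condMean z = (∫ t in Ioi z, (t - z) * exp (-t ^ 2 / 2)) / gaussTail z := by
  rw [integral_Ioi_sub_mul_exp_neg_sq_div_two, sub_div, mul_div_cancel_right₀ _
    (gaussTail_pos z).ne', condMean, gaussTail]

lemma one_div_four_le_mul_condMean {z : ℝ} (hz : 1 ≤ z) : 1 / 4 ≤ z * condMean z := by
  have hG := gaussTail_pos z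
  have hmills := gaussTail_le_div_mul_exp z (by linarith) (by nlinarith)
  rw [div_mul_eq_mul_div, le_div_iff₀ (by positivity)] at hmills
  rw [show z * condMean z = z * exp (-z ^ 2 / 2) / gaussTail z - z ^ 2 by
    rw [condMean, gaussTail]; ring, le_sub_iff_add_le, le_div_iff₀ hG]
  linarith

lemma exists_pos_le_condMean : ∃ δ > 0, ∀ z ≤ 1, δ ≤ condMean z := by
  have hA := antitone_integral_Ioi_sub_mul_exp_neg_sq_div_two
  set A := fun a : ℝ => ∫ t in Ioi a, (t - a) * exp (-t ^ 2 / 2)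
  have hA1 : 0 < A 1 := by
    have hmills := gaussTail_le_div_mul_exp 1 zero_le_one (by norm_num)
    have hG := gaussTail_pos 1
    simp only [A, integral_Ioi_sub_mul_exp_neg_sq_div_two]
    norm_num at hmills ⊢
    linarith
  refine ⟨A 1 / ∫ t, exp (-t ^ 2 / 2),
    div_pos hA1 ((gaussTail_pos 1).trans_le (gaussTail_le_integral 1)), fun z hz => ?_⟩
  rw [condMean_eq_integral_div]
  exact div_le_div₀ (hA1.le.trans (hA hz)) (hA hz) (gaussTail_pos z) (gaussTail_le_integral z)

lemma condMean_pos (z : ℝ) : 0 < condMean z := by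
  obtain ⟨δ, hδ, hle⟩ := exists_pos_le_condMean
  rcases le_total z 1 with hz | hz
  · exact hδ.trans_le (hle z hz)
  · exact pos_of_mul_pos_right ((by norm_num : (0 : ℝ) < 1 / 4).trans_le
      (one_div_four_le_mul_condMean hz)) (by linarith)

lemma integral_condDens_Ioi (z s : ℝ) :
    ∫ t in Ioi s, condDens z t = gaussTail (z + s) / gaussTail z := by
  simp_rw [condDens]
  rw [integral_div, setIntegral_Ioi_comp_add_right (fun t => exp (-t ^ 2 / 2)), add_comm]
  rfl

lemma integral_condDens_Ioi_mul_condMean_le (z : ℝ) {k : ℝ} (hk : 1 ≤ k) :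
    ∫ t in Ioi (k * condMean z), condDens z t ≤
      exp (-((k - 1) * condMean z * (z + condMean z) + ((k - 1) * condMean z) ^ 2 / 2)) := by
  set m := condMean z
  have hm := condMean_pos z
  have hshift : 0 ≤ (k - 1) * m := mul_nonneg (by linarith) hm.le
  rw [integral_condDens_Ioi, div_le_iff₀ (gaussTail_pos z),
    show z + k * m = (z + m) + (k - 1) * m by ring]
  calc gaussTail (z + m + (k - 1) * m)
      ≤ exp (-((z + m) * ((k - 1) * m)) - ((k - 1) * m) ^ 2 / 2) * gaussTail (z + m) :=
        gaussTail_add_le _ hshift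
    _ ≤ _ := by
        rw [show -((z + m) * ((k - 1) * m)) - ((k - 1) * m) ^ 2 / 2
          = -((k - 1) * m * (z + m) + ((k - 1) * m) ^ 2 / 2) by ring]
        exact mul_le_mul_of_nonneg_left (gaussTail_antitone (by linarith)) (exp_pos _).le

lemma exists_pos_mul_le_tail_exponent : ∃ c > 0, ∀ z : ℝ, ∀ j : ℕ,
    c * j ≤ j * condMean z * (z + condMean z) + (j * condMean z) ^ 2 / 2 := by
  obtain ⟨δ, hδ, hle⟩ := exists_pos_le_condMean
  refine ⟨min (1 / 4) (δ ^ 2 / 2), by positivity, fun z j => ?_⟩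
  have hm := condMean_pos z
  have hj : (0 : ℝ) ≤ j := j.cast_nonneg
  rcases le_total z 1 with hz | hz
  · have hr : 0 < z + condMean z := by
      rw [add_condMean]; exact div_pos (exp_pos _) (gaussTail_pos z)
    have hjj : (j : ℝ) ≤ (j : ℝ) ^ 2 := by exact_mod_cast Nat.le_self_pow two_ne_zero j
    have hδm : δ ^ 2 ≤ condMean z ^ 2 := pow_le_pow_left₀ hδ.le (hle z hz) 2
    calc min (1 / 4) (δ ^ 2 / 2) * j ≤ δ ^ 2 / 2 * j := by gcongr; exact min_le_right _ _
      _ ≤ (j * condMean z) ^ 2 / 2 := by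
          rw [mul_pow]; nlinarith [mul_le_mul hjj hδm (sq_nonneg δ) (sq_nonneg _)]
      _ ≤ _ := le_add_of_nonneg_left (by positivity)
  · have hzm := one_div_four_le_mul_condMean hz
    calc min (1 / 4) (δ ^ 2 / 2) * j ≤ (1 / 4 : ℝ) * j := by gcongr; exact min_le_left _ _
      _ ≤ j * condMean z * (z + condMean z) := by nlinarith [sq_nonneg (condMean z)]
      _ ≤ _ := le_add_of_nonneg_right (by positivity)

theorem condDens_tail_exponential_bound :
    ∃ C > (0 : ℝ), ∃ c > (0 : ℝ), ∀ z : ℝ, ∀ k : ℕ, 1 ≤ k →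
      (∫ t in Set.Ioi ((k : ℝ) * condMean z), condDens z t) ≤ C * Real.exp (-c * k) := by
  obtain ⟨c, hc, hexponent⟩ := exists_pos_mul_le_tail_exponent
  refine ⟨exp c, exp_pos c, c, hc, fun z k hk => ?_⟩
  obtain ⟨j, rfl⟩ := Nat.exists_eq_add_of_le' hk
  calc ∫ t in Ioi (((j + 1 : ℕ) : ℝ) * condMean z), condDens z t
      ≤ exp (-(j * condMean z * (z + condMean z) + (j * condMean z) ^ 2 / 2)) := by
        simpa using integral_condDens_Ioi_mul_condMean_le z (k := j + 1) (by simp)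
    _ ≤ exp (-(c * j)) := exp_le_exp.2 (neg_le_neg (hexponent z j))
    _ = exp c * exp (-c * ((j + 1 : ℕ) : ℝ)) := by
        rw [← exp_add]; push_cast; ring_nf
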